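/- arXiv:1309.7874 — 5 statements merged into one kernel-verified Lean document; each statement's English description precedes it below -/
import Mathlib

section
/- If G is an edge critical graph and v is any vertex of G, then α(G_v) = α(G) − 1, where G_v is the induced subgraph on the vertices outside the closed neighborhood of v. -/
/-- A set of vertices is independent if no two of its elements are adjacent. -/
def SimpleGraph.IsIndepSet' {V : Type*} (G : SimpleGraph V) (s : Set V) : Prop :=
  s.Pairwise fun a b => ¬ G.Adj a b

/-- The independence number of a graph. -/
noncomputable def indepNum {V : Type*} (G : SimpleGraph V) : ℕ :=
  sSup {n | ∃ s : Set V, SimpleGraph.IsIndepSet' G s ∧ s.ncard = n}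

/-- The closed neighbourhood `B(v;1) = {v} ∪ N(v)`. -/
def ball {V : Type*} (G : SimpleGraph V) (v : V) : Set V :=
  insert v (G.neighborSet v)


/-- `G` is edge critical: removing any edge (i.e. passing to a proper subgraph on the
same vertex set) strictly increases the independence number. -/
def EdgeCritical {V : Type*} (G : SimpleGraph V) : Prop :=
  ∀ H : SimpleGraph V, H < G → indepNum G < indepNum H

section Helpers

variable {V : Type*} [Finite V]

lemma indep_bdd (G : SimpleGraph V) :
    BddAbove {n | ∃ s : Set V, SimpleGraph.IsIndepSet' G s ∧ s.ncard = n} := by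
  refine ⟨Nat.card V, ?_⟩
  rintro n ⟨s, -, rfl⟩
  have h := Set.ncard_le_ncard (Set.subset_univ s) Set.finite_univ
  rwa [Set.ncard_univ] at h

lemma le_indepNum (G : SimpleGraph V) {s : Set V} (h : SimpleGraph.IsIndepSet' G s) :
    s.ncard ≤ indepNum G :=
  le_csSup (indep_bdd G) ⟨s, h, rfl⟩

lemma exists_indep_eq (G : SimpleGraph V) :
    ∃ s : Set V, SimpleGraph.IsIndepSet' G s ∧ s.ncard = indepNum G := by
  have hne : {n | ∃ s : Set V, SimpleGraph.IsIndepSet' G s ∧ s.ncard = n}.Nonempty :=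
    ⟨0, ∅, by simp [SimpleGraph.IsIndepSet'], by simp⟩
  exact Nat.sSup_mem hne (indep_bdd G)

lemma exists_max_indep_mem (G : SimpleGraph V) (hG : EdgeCritical G) (v : V) :
    ∃ S : Set V, G.IsIndepSet' S ∧ v ∈ S ∧ indepNum G ≤ S.ncard := by
  by_cases hv : ∃ w, G.Adj v w
  · obtain ⟨w, hvw⟩ := hv
    set H := G.deleteEdges {s(v, w)} with hH
    have hle : H ≤ G := SimpleGraph.deleteEdges_le _
    have hlt : H < G := by
      refine lt_of_le_of_ne hle ?_
      intro h
      have hadj : H.Adj v w := h ▸ hvw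
      simp [hH, SimpleGraph.deleteEdges_adj] at hadj
    have hnum := hG H hlt
    obtain ⟨S, hS, hcard⟩ := exists_indep_eq H
    have key : ∀ a ∈ S, ∀ b ∈ S, a ≠ b → G.Adj a b →
        (a = v ∧ b = w) ∨ (a = w ∧ b = v) := by
      intro a ha b hb hab hadj
      have h1 := hS ha hb hab
      rw [hH, SimpleGraph.deleteEdges_adj] at h1
      push_neg at h1
      have h2 := h1 hadj
      simp only [Set.mem_singleton_iff] at h2
      rwa [Sym2.eq_iff] at h2
    have hvS : v ∈ S := by
      by_contra hvS
      have hSG : G.IsIndepSet' S := by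
        intro a ha b hb hab hadj
        rcases key a ha b hb hab hadj with ⟨rfl, rfl⟩ | ⟨rfl, rfl⟩
        · exact hvS ha
        · exact hvS hb
      have := le_indepNum G hSG
      omega
    have hwS : w ∈ S := by
      by_contra hwS
      have hSG : G.IsIndepSet' S := by
        intro a ha b hb hab hadj
        rcases key a ha b hb hab hadj with ⟨rfl, rfl⟩ | ⟨rfl, rfl⟩
        · exact hwS hb
        · exact hwS ha
      have := le_indepNum G hSG
      omega
    refine ⟨S \ {w}, ?_, ⟨hvS, by simpa using hvw.ne⟩, ?_⟩
    · intro a ha b hb hab hadj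
      rcases key a ha.1 b hb.1 hab hadj with ⟨rfl, rfl⟩ | ⟨rfl, rfl⟩
      · exact hb.2 rfl
      · exact ha.2 rfl
    · have h3 : (S \ {w}).ncard + 1 = S.ncard :=
        Set.ncard_diff_singleton_add_one hwS (Set.toFinite S)
      omega
  · push_neg at hv
    obtain ⟨T, hT, hTcard⟩ := exists_indep_eq G
    refine ⟨insert v T, ?_, Set.mem_insert _ _, ?_⟩
    · intro a ha b hb hab hadj
      rcases ha with rfl | ha
      · exact hv b hadj
      · rcases hb with rfl | hb
        · exact hv a hadj.symm
        · exact hT ha hb hab hadj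
    · calc indepNum G = T.ncard := hTcard.symm
        _ ≤ (insert v T).ncard :=
          Set.ncard_le_ncard (Set.subset_insert _ _) (Set.toFinite _)

end Helpers

theorem indepNum_delete_ball_of_edgeCritical {V : Type*} [Fintype V] (G : SimpleGraph V)
    (hG : EdgeCritical G) (v : V) :
    indepNum (G.induce (ball G v)ᶜ) + 1 = indepNum G := by
  apply Nat.le_antisymm
  · -- lift a max independent set of the induced graph and add v
    obtain ⟨t, ht, htc⟩ := exists_indep_eq (G.induce (ball G v)ᶜ)
    have hvnot : v ∉ Subtype.val '' t := by
      rintro ⟨x, -, hx⟩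
      exact x.2 (show (x : V) ∈ insert v (G.neighborSet v) by
        rw [hx]; exact Set.mem_insert _ _)
    have hindep : G.IsIndepSet' (insert v (Subtype.val '' t)) := by
      intro a ha b hb hab hadj
      rcases ha with rfl | ⟨x, hx, rfl⟩
      · rcases hb with rfl | ⟨y, hy, rfl⟩
        · exact hab rfl
        · exact y.2 (Set.mem_insert_iff.mpr (Or.inr hadj))
      · rcases hb with rfl | ⟨y, hy, rfl⟩
        · exact x.2 (Set.mem_insert_iff.mpr (Or.inr hadj.symm))
        · have hxy : x ≠ y := fun h => hab (by rw [h])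
          exact ht hx hy hxy hadj
    have hle := le_indepNum G hindep
    rw [Set.ncard_insert_of_notMem hvnot (Set.toFinite _),
      Set.ncard_image_of_injective _ Subtype.val_injective, htc] at hle
    exact hle
  · obtain ⟨S, hS, hvS, hcard⟩ := exists_max_indep_mem G hG v
    set t : Set ↥(ball G v)ᶜ := {x | ↑x ∈ S} with htdef
    have htindep : (G.induce (ball G v)ᶜ).IsIndepSet' t := by
      intro x hx y hy hxy hadj
      have : (x : V) ≠ y := fun h => hxy (Subtype.ext h)
      exact hS hx hy this hadj
    have himg : Subtype.val '' t = S \ {v} := by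
      ext z
      constructor
      · rintro ⟨x, hx, rfl⟩
        refine ⟨hx, ?_⟩
        intro h
        exact x.2 (show (x : V) ∈ insert v (G.neighborSet v) by
          rw [h]; exact Set.mem_insert _ _)
      · rintro ⟨hzS, hzv⟩
        have hznv : z ∉ ball G v := by
          intro h
          rcases h with h | h
          · exact hzv h
          · exact hS hvS hzS (fun he => hzv he.symm) h
        exact ⟨⟨z, hznv⟩, hzS, rfl⟩
    have htcard : t.ncard = (S \ {v}).ncard := by
      rw [← himg, Set.ncard_image_of_injective _ Subtype.val_injective]
    have hdiff : (S \ {v}).ncard + 1 = S.ncard :=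
      Set.ncard_diff_singleton_add_one hvS (Set.toFinite S)
    have hle := le_indepNum (G.induce (ball G v)ᶜ) htindep
    omega
end

section
/- If G is a triangle free graph and v a vertex of G, then the number of edges of G_v equals e(G) − d²(v), where d²(v) is the sum of the degrees of the neighbors of v. -/
/-! Every edge of `G` either meets `N(v)` or is an edge of `G_v`, since an edge through `v` meets
`N(v)` at its other end. In a triangle-free graph `N(v)` is independent, so an edge meeting `N(v)`
meets it in exactly one vertex and is counted exactly once in `d²(v)`. -/

open Finset

namespace SimpleGraph

variable {V : Type*} (G : SimpleGraph V)

theorem card_filter_edgeFinset_exists_mem_of_isIndepSet [Fintype V] [DecidableEq V]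
    [DecidableRel G.Adj] {s : Finset V} (hs : G.IsIndepSet s) :
    #{e ∈ G.edgeFinset | ∃ w ∈ s, w ∈ e} = ∑ w ∈ s, G.degree w := by
  have hbiUnion : {e ∈ G.edgeFinset | ∃ w ∈ s, w ∈ e} = s.biUnion (G.incidenceFinset ·) := by
    ext e
    simp only [mem_filter, mem_biUnion, mem_incidenceFinset, mem_edgeFinset]
    grind [incidenceSet]
  rw [hbiUnion, card_biUnion]
  · simp only [card_incidenceFinset_eq_degree]
  · intro a ha b hb hab
    rw [Function.onFun, ← disjoint_coe, coe_incidenceFinset, coe_incidenceFinset,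
      Set.disjoint_iff_inter_eq_empty]
    exact G.incidenceSet_inter_incidenceSet_of_not_adj (hs ha hb hab) hab

theorem ncard_edgeSet_induce [Fintype V] [DecidableEq V] [DecidableRel G.Adj] (s : Set V)
    [DecidablePred (· ∈ s)] :
    (G.induce s).edgeSet.ncard = #{e ∈ G.edgeFinset | ∀ w ∈ e, w ∈ s} := by
  rw [← coe_edgeFinset, Set.ncard_coe_finset,
    ← card_map (Function.Embedding.subtype (· ∈ s)).sym2Map, map_edgeFinset_induce]
  congr 1
  ext e
  simp [mem_sym2_iff]

end SimpleGraph

theorem forall_mem_compl_ball_iff {V : Type*} {G : SimpleGraph V} {v : V} {e : Sym2 V}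
    (he : e ∈ G.edgeSet) : (∀ w ∈ e, w ∈ (ball G v)ᶜ) ↔ ¬∃ w ∈ G.neighborSet v, w ∈ e := by
  induction e with
  | h a b =>
    have hab : G.Adj a b := he
    simp only [ball, Set.mem_compl_iff, Set.mem_insert_iff, not_or, Sym2.mem_iff,
      forall_eq_or_imp, forall_eq, SimpleGraph.mem_neighborSet]
    grind [G.adj_comm]

theorem edges_delete_ball_of_triangleFree {V : Type*} [Fintype V] (G : SimpleGraph V)
    [DecidableRel G.Adj] (hG : G.CliqueFree 3) (v : V) :
    (G.induce (ball G v)ᶜ).edgeSet.ncard + ∑ w ∈ G.neighborFinset v, G.degree w =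
      G.edgeFinset.card := by
  classical
  have hN : G.IsIndepSet (G.neighborFinset v : Set V) := by
    rw [SimpleGraph.coe_neighborFinset]
    exact G.isIndepSet_neighborSet_of_triangleFree hG v
  rw [G.ncard_edgeSet_induce (ball G v)ᶜ, ← G.card_filter_edgeFinset_exists_mem_of_isIndepSet hN,
    ← card_filter_add_card_filter_not (s := G.edgeFinset) fun e ↦ ∃ w ∈ G.neighborFinset v, w ∈ e,
    add_comm]
  congr 2
  apply filter_congr
  intro e he
  rw [forall_mem_compl_ball_iff (G.mem_edgeFinset.mp he)]
  simp only [SimpleGraph.mem_neighborFinset, SimpleGraph.mem_neighborSet]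
end

section
/- The graph W_{13;1,5} on vertex set Z/13Z, with x adjacent to y iff x − y ≡ ±1 or ±5 (mod 13), is triangle free and has independence number 4. -/
/-- The circulant graph \`W_{13;1,5}\` on \`ZMod 13\`: \`x\` and \`y\` are adjacent iff
\`x - y ≡ ±1\` or \`±5 (mod 13)\`. -/
def W13 : SimpleGraph (ZMod 13) :=
  SimpleGraph.fromRel fun x y => x - y = 1 ∨ x - y = 5

/-!
`W13` is triangle free because no two of the jumps `±1, ±5` add up to a third one modulo 13.
An independent set may be translated so that it contains `0`; its other elements then form an
independent set among the eight vertices outside the closed neighbourhood of `0`. These induce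
the 8-cycle `2 3 4 9 10 11 6 7` with the chords `2 10` and `3 11`, which cut both of its
independent 4-sets, so an independent set has at most `1 + 3` elements; `{0, 2, 4, 6}` has four.
-/

open SimpleGraph (circulantGraph circulantGraph_adj circulantGraph_adj_translate is3Clique_iff
  mem_neighborSet)

section IndepSet

variable {V : Type*} {G : SimpleGraph V}

theorem sdiff_singleton_subset_compl_ball {s : Set V} {v : V}
    (hs : G.IsIndepSet' s) (hv : v ∈ s) : s \ {v} ⊆ (ball G v)ᶜ := by
  rintro w ⟨hws, hwv⟩ (rfl | hvw)
  · exact hwv rfl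
  · exact hs hv hws (Ne.symm hwv) hvw

theorem ncard_le_succ_of_isIndepSet' {s : Set V} {v : V} {k : ℕ}
    (hs : G.IsIndepSet' s) (hv : v ∈ s)
    (hk : ∀ t ⊆ (ball G v)ᶜ, G.IsIndepSet' t → t.ncard ≤ k) : s.ncard ≤ k + 1 := by
  have h := hk _ (sdiff_singleton_subset_compl_ball hs hv) (Set.Pairwise.mono Set.sdiff_subset hs)
  rw [Set.ncard_sdiff_singleton_of_mem hv] at h
  omega

theorem indepNum_eq {s : Set V} {k : ℕ} (hs : G.IsIndepSet' s) (hsk : s.ncard = k)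
    (hmax : ∀ t, G.IsIndepSet' t → t.ncard ≤ k) : indepNum G = k := by
  have hbdd : k ∈ upperBounds {n | ∃ t : Set V, G.IsIndepSet' t ∧ t.ncard = n} := by
    rintro _ ⟨t, ht, rfl⟩
    exact hmax t ht
  exact le_antisymm (csSup_le ⟨_, s, hs, rfl⟩ hbdd) (le_csSup ⟨_, hbdd⟩ ⟨s, hs, hsk⟩)

end IndepSet

section Circulant

variable {A : Type*} [AddGroup A] {S : Set A}

theorem isIndepSet'_circulantGraph_preimage_add_right {t : Set A}
    (ht : (circulantGraph S).IsIndepSet' t) (d : A) :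
    (circulantGraph S).IsIndepSet' ((· + d) ⁻¹' t) :=
  fun _ ha _ hb hab hadj =>
    ht ha hb ((add_left_injective d).ne hab) (circulantGraph_adj_translate.2 hadj)

theorem ncard_le_succ_of_isIndepSet'_circulantGraph {s : Set A} {k : ℕ}
    (hs : (circulantGraph S).IsIndepSet' s)
    (hk : ∀ t ⊆ (ball (circulantGraph S) 0)ᶜ, (circulantGraph S).IsIndepSet' t → t.ncard ≤ k) :
    s.ncard ≤ k + 1 := by
  rcases s.eq_empty_or_nonempty with rfl | ⟨v, hv⟩
  · simp
  rw [← Set.ncard_preimage_of_injective_subset_range (add_left_injective v)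
    ((add_right_surjective v).range_eq ▸ Set.subset_univ s)]
  exact ncard_le_succ_of_isIndepSet' (isIndepSet'_circulantGraph_preimage_add_right hs v)
    (v := 0) (by simpa using hv) hk

end Circulant

theorem W13_eq_circulantGraph : W13 = circulantGraph {1, 5} := rfl

def W13.jumps : Finset (ZMod 13) := {1, -1, 5, -5}

def W13.farFromZero : Finset (ZMod 13) := {2, 3, 4, 6, 7, 9, 10, 11}

theorem W13_adj_iff {x y : ZMod 13} : W13.Adj x y ↔ x - y ∈ W13.jumps := by
  rw [W13_eq_circulantGraph, circulantGraph_adj, ← neg_sub x y, ← sub_eq_zero (a := x)]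
  generalize x - y = d
  simp only [Set.mem_insert_iff, Set.mem_singleton_iff]
  revert d
  decide

instance : DecidableRel W13.Adj := fun _ _ => decidable_of_iff _ W13_adj_iff.symm

theorem W13_cliqueFree_three : W13.CliqueFree 3 := by
  have hjumps : ∀ d ∈ W13.jumps, ∀ e ∈ W13.jumps, d + e ∉ W13.jumps := by decide
  intro t ht
  obtain ⟨a, b, c, hab, hac, hbc, -⟩ := is3Clique_iff.1 ht
  rw [W13_adj_iff] at hab hac hbc
  exact hjumps _ hab _ hbc (by rwa [sub_add_sub_cancel])

theorem W13_compl_ball_zero : (ball W13 0)ᶜ = W13.farFromZero := by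
  ext x
  simp only [ball, Set.mem_compl_iff, Set.mem_insert_iff, mem_neighborSet, Finset.mem_coe]
  revert x
  decide

theorem W13_ncard_le_three_of_subset_compl_ball_zero {t : Set (ZMod 13)}
    (ht : t ⊆ (ball W13 0)ᶜ) (hi : W13.IsIndepSet' t) : t.ncard ≤ 3 := by
  have hcheck : ∀ a ∈ W13.farFromZero, ∀ b ∈ W13.farFromZero, ∀ c ∈ W13.farFromZero,
      ∀ d ∈ W13.farFromZero, a ≠ b → a ≠ c → a ≠ d → b ≠ c → b ≠ d → c ≠ d →
      W13.Adj a b ∨ W13.Adj a c ∨ W13.Adj a d ∨ W13.Adj b c ∨ W13.Adj b d ∨ W13.Adj c d := by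
    decide
  rw [W13_compl_ball_zero] at ht
  by_contra! h
  obtain ⟨a, ha, b, hb, c, hc, d, hd, hab, hac, had, hbc, hbd, hcd⟩ :=
    (Set.three_lt_ncard t.toFinite).1 h
  rcases hcheck a (ht ha) b (ht hb) c (ht hc) d (ht hd) hab hac had hbc hbd hcd with
    h | h | h | h | h | h
  exacts [hi ha hb hab h, hi ha hc hac h, hi ha hd had h, hi hb hc hbc h, hi hb hd hbd h,
    hi hc hd hcd h]

theorem W13_isIndepSet'_zero_two_four_six :
    W13.IsIndepSet' ↑({0, 2, 4, 6} : Finset (ZMod 13)) := by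
  have hcheck : ∀ a ∈ ({0, 2, 4, 6} : Finset (ZMod 13)), ∀ b ∈ ({0, 2, 4, 6} : Finset (ZMod 13)),
      a ≠ b → ¬ W13.Adj a b := by decide
  exact fun a ha b hb => hcheck a ha b hb

theorem W13_triangleFree_indepNum :
    W13.CliqueFree 3 ∧ indepNum W13 = 4 := by
  refine ⟨W13_cliqueFree_three, indepNum_eq W13_isIndepSet'_zero_two_four_six ?_ ?_⟩
  · rw [Set.ncard_coe_finset]
    rfl
  · intro s hs
    exact ncard_le_succ_of_isIndepSet'_circulantGraph (S := {1, 5}) hs fun _ ht hi =>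
      W13_ncard_le_three_of_subset_compl_ball_zero ht hi
end

section
/- The circulant graph W_{13;1,5} is 4-stable: for every set M of at most 4 vertices, the induced subgraph on the complement of M still has independence number 4 (equal to that of the whole graph). -/
open Set

theorem Set.Finite.exists_fin_subset_range {α : Type*} [Nonempty α] {M : Set α} (hM : M.Finite)
    {n : ℕ} (h : M.ncard ≤ n) : ∃ f : Fin n → α, M ⊆ range f := by
  induction n generalizing M with
  | zero =>
    rw [Nat.le_zero, ncard_eq_zero hM] at h
    exact ⟨Fin.elim0, h ▸ empty_subset _⟩
  | succ n ih =>
    rcases M.eq_empty_or_nonempty with rfl | ⟨a, ha⟩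
    · exact ⟨fun _ => Classical.arbitrary α, empty_subset _⟩
    have hdiff : (M \ {a}).ncard ≤ n := by
      have := ncard_sdiff_singleton_add_one ha hM
      omega
    obtain ⟨f, hf⟩ := ih hM.sdiff hdiff
    refine ⟨Fin.cons a f, ?_⟩
    rw [Fin.range_cons]
    calc M ⊆ insert a (M \ {a}) := subset_insert_sdiff_singleton a M
      _ ⊆ insert a (range f) := insert_subset_insert hf

section

variable {V : Type*} {G : SimpleGraph V}

instance [DecidableEq V] [DecidableRel G.Adj] (v : V) : DecidablePred (· ∈ ball G v) :=
  fun x => decidable_of_iff (x = v ∨ G.Adj v x) Iff.rfl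

theorem indepNum_eq_of_forall_ncard_le {k : ℕ} (hle : ∀ s, G.IsIndepSet' s → s.ncard ≤ k)
    {s : Set V} (hs : G.IsIndepSet' s) (hk : s.ncard = k) : indepNum G = k := by
  have hbdd : ∀ n ∈ {n | ∃ s : Set V, G.IsIndepSet' s ∧ s.ncard = n}, n ≤ k := by
    rintro _ ⟨t, ht, rfl⟩
    exact hle t ht
  exact le_antisymm (csSup_le ⟨k, s, hs, hk⟩ hbdd) (le_csSup ⟨k, hbdd⟩ ⟨s, hs, hk⟩)

theorem indepNum_induce_eq {U : Set V} {k : ℕ} (hle : ∀ s, G.IsIndepSet' s → s.ncard ≤ k)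
    {s : Set V} (hsU : s ⊆ U) (hs : G.IsIndepSet' s) (hk : s.ncard = k) :
    indepNum (G.induce U) = k := by
  refine indepNum_eq_of_forall_ncard_le (fun t ht => ?_) (s := Subtype.val ⁻¹' s) ?_ ?_
  · rw [← ncard_image_of_injective t Subtype.val_injective]
    exact hle _ (Subtype.val_injective.injOn.pairwise_image.mpr ht)
  · exact fun x hx y hy hne => hs hx hy (Subtype.val_injective.ne hne)
  · rwa [ncard_preimage_of_injective_subset_range Subtype.val_injective (by simpa)]

theorem SimpleGraph.IsIndepSet'.ncard_le_succ [Finite V] {U S : Set V} {k : ℕ}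
    (hS : G.IsIndepSet' S) (hSU : S ⊆ U)
    (h : ∀ a ∈ U, ∀ T ⊆ U \ _root_.ball G a, G.IsIndepSet' T → T.ncard ≤ k) :
    S.ncard ≤ k + 1 := by
  rcases S.eq_empty_or_nonempty with rfl | ⟨a, ha⟩
  · simp
  have hsub : S \ {a} ⊆ U \ _root_.ball G a := by
    rintro x ⟨hxS, hxa⟩
    refine ⟨hSU hxS, ?_⟩
    rintro (rfl | hadj)
    · exact hxa rfl
    · exact hS ha hxS (Ne.symm hxa) hadj
  rw [← ncard_sdiff_singleton_add_one ha]
  exact Nat.add_le_add_right (h a (hSU ha) _ hsub (Set.Pairwise.mono sdiff_subset hS)) 1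

end

instance inst_s14 : DecidableRel W13.Adj :=
  inferInstanceAs (DecidableRel (SimpleGraph.fromRel _).Adj)

theorem W13_adj_add_right {x y : ZMod 13} (i : ZMod 13) :
    W13.Adj (x + i) (y + i) ↔ W13.Adj x y := by
  simp [W13]

theorem W13_isDominating_of_four : ∀ a b : ZMod 13, b ∉ ball W13 a →
    ∀ c, c ∉ ball W13 a → c ∉ ball W13 b →
    ∀ d, d ∉ ball W13 a → d ∉ ball W13 b → d ∉ ball W13 c →
    ∀ x, x ∈ ball W13 a ∨ x ∈ ball W13 b ∨ x ∈ ball W13 c ∨ x ∈ ball W13 d := by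
  decide

theorem W13_indepSet_ncard_le (S : Set (ZMod 13)) (hS : W13.IsIndepSet' S) : S.ncard ≤ 4 := by
  refine hS.ncard_le_succ (subset_univ S) fun a _ T hT hTi => ?_
  refine hTi.ncard_le_succ hT fun b hb T hT hTi => ?_
  refine hTi.ncard_le_succ hT fun c hc T hT hTi => ?_
  refine hTi.ncard_le_succ hT fun d hd T hT hTi => ?_
  simp only [mem_sdiff, mem_univ, true_and] at hb hc hd
  have hT0 : T = ∅ := eq_empty_of_forall_notMem fun x hx => by
    have hx' := hT hx
    simp only [mem_sdiff, mem_univ, true_and] at hx'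
    rcases W13_isDominating_of_four a b hb c hc.1 hc.2 d hd.1.1 hd.1.2 hd.2 x with h | h | h | h <;>
      tauto
  simp [hT0]

def W13_indepFourReps : List (Finset (ZMod 13)) :=
  [{0, 2, 4, 6}, {0, 2, 6, 9}, {0, 3, 6, 9}]

theorem W13_indepFourReps_spec :
    ∀ s ∈ W13_indepFourReps, s.card = 4 ∧ ∀ x ∈ s, ∀ y ∈ s, ¬ W13.Adj x y := by
  simp only [W13_indepFourReps, List.forall_mem_cons, List.not_mem_nil, IsEmpty.forall_iff,
    implies_true, and_true]
  decide

theorem W13_exists_translate_avoiding : ∀ a b c d : ZMod 13, ∃ i : ZMod 13,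
    ∃ s ∈ W13_indepFourReps, a - i ∉ s ∧ b - i ∉ s ∧ c - i ∉ s ∧ d - i ∉ s := by
  decide +kernel

theorem W13_exists_indep_four_subset_compl (M : Set (ZMod 13)) (hM : M.ncard ≤ 4) :
    ∃ T ⊆ Mᶜ, W13.IsIndepSet' T ∧ T.ncard = 4 := by
  obtain ⟨f, hf⟩ := M.toFinite.exists_fin_subset_range hM
  obtain ⟨i, s, hs, h0, h1, h2, h3⟩ := W13_exists_translate_avoiding (f 0) (f 1) (f 2) (f 3)
  obtain ⟨hcard, hind⟩ := W13_indepFourReps_spec s hs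
  refine ⟨(· + i) '' s, ?_, ?_, ?_⟩
  · rintro _ ⟨x, hx, rfl⟩ hxM
    obtain ⟨j, hj⟩ := hf hxM
    rw [eq_sub_of_add_eq hj.symm] at hx
    fin_cases j <;> contradiction
  · rintro _ ⟨x, hx, rfl⟩ _ ⟨y, hy, rfl⟩ _
    rw [W13_adj_add_right]
    exact hind x hx y hy
  · rw [ncard_image_of_injective _ (add_left_injective i), ncard_coe_finset, hcard]

theorem W13_four_stable (M : Set (ZMod 13)) (hM : M.ncard ≤ 4) :
    indepNum (W13.induce Mᶜ) = 4 := by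
  obtain ⟨T, hTM, hT, hcard⟩ := W13_exists_indep_four_subset_compl M hM
  exact indepNum_induce_eq W13_indepSet_ncard_le hTM hT hcard
end

section
/- If G is an edge critical graph and v is a vertex with at least one neighbor, then there is a set S ⊆ V(G) \ B(v;1) of size α(G) − 1 that is independent in G and is disjoint from the closed neighborhood of v. -/
lemma bdd {V : Type*} [Fintype V] (G : SimpleGraph V) :
    BddAbove {n | ∃ s : Set V, SimpleGraph.IsIndepSet' G s ∧ s.ncard = n} := by
  refine ⟨Fintype.card V, ?_⟩
  rintro n ⟨t, -, rfl⟩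
  simpa [Set.ncard_univ] using Set.ncard_le_ncard (Set.subset_univ t) Set.finite_univ

lemma indep_ncard_le_indepNum {V : Type*} [Fintype V] (G : SimpleGraph V) {s : Set V}
    (hs : G.IsIndepSet' s) : s.ncard ≤ indepNum G :=
  le_csSup (bdd G) ⟨s, hs, rfl⟩

lemma exists_max_indep' {V : Type*} [Fintype V] (G : SimpleGraph V) :
    ∃ s : Set V, G.IsIndepSet' s ∧ s.ncard = indepNum G := by
  have h : indepNum G ∈ {n | ∃ s : Set V, SimpleGraph.IsIndepSet' G s ∧ s.ncard = n} := by
    apply Nat.sSup_mem _ (bdd G)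
    exact ⟨0, ⟨∅, by simp [SimpleGraph.IsIndepSet'], by simp⟩⟩
  exact h

theorem exists_indep_outside_ball {V : Type*} [Fintype V] (G : SimpleGraph V)
    (hcrit : EdgeCritical G) (v w : V) (hw : G.Adj v w) :
    ∃ S : Set V, S ⊆ (ball G v)ᶜ ∧ SimpleGraph.IsIndepSet' G S ∧
      S.ncard = indepNum G - 1 := by
  classical
  set H := G.deleteEdges {s(v, w)} with hHdef
  have hvw : v ≠ w := G.ne_of_adj hw
  have hadj : ∀ a b, H.Adj a b ↔ G.Adj a b ∧ ¬((a = v ∧ b = w) ∨ (a = w ∧ b = v)) := by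
    intro a b
    simp [hHdef, SimpleGraph.deleteEdges_adj, Sym2.eq_iff]
  have hHG : H < G := by
    refine lt_of_le_of_ne (SimpleGraph.deleteEdges_le _) fun h => ?_
    have : H.Adj v w := h ▸ hw
    rw [hadj] at this
    exact this.2 (Or.inl ⟨rfl, rfl⟩)
  have hlt := hcrit H hHG
  obtain ⟨T, hT, hTcard⟩ := exists_max_indep' H
  have hkey : ∀ a b, a ∈ T → b ∈ T → G.Adj a b →
      (a = v ∧ b = w) ∨ (a = w ∧ b = v) := by
    intro a b ha hb hab
    by_contra hne
    exact hT ha hb (G.ne_of_adj hab) ((hadj a b).mpr ⟨hab, hne⟩)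
  -- v and w must both lie in T
  have hnotindep : ¬ G.IsIndepSet' T := by
    intro hTG
    have := indep_ncard_le_indepNum G hTG
    omega
  have hvT : v ∈ T := by
    by_contra hv
    apply hnotindep
    intro a ha b hb hne hab
    rcases hkey a b ha hb hab with ⟨rfl, rfl⟩ | ⟨rfl, rfl⟩
    · exact hv ha
    · exact hv hb
  have hwT : w ∈ T := by
    by_contra hwm
    apply hnotindep
    intro a ha b hb hne hab
    rcases hkey a b ha hb hab with ⟨rfl, rfl⟩ | ⟨rfl, rfl⟩
    · exact hwm hb
    · exact hwm ha
  refine ⟨T \ {v, w}, ?_, ?_, ?_⟩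
  · -- outside the closed ball
    rintro x ⟨hxT, hxvw⟩
    simp only [Set.mem_insert_iff, Set.mem_singleton_iff, not_or] at hxvw
    intro hx
    rcases hx with rfl | hx
    · exact hxvw.1 rfl
    · -- G.Adj v x
      have hvx : G.Adj v x := hx
      rcases hkey v x hvT hxT hvx with ⟨-, rfl⟩ | ⟨h1, -⟩
      · exact hxvw.2 rfl
      · exact hvw h1
  · -- independent in G
    intro a ha b hb hne hab
    rcases hkey a b ha.1 hb.1 hab with ⟨rfl, rfl⟩ | ⟨rfl, rfl⟩
    · exact ha.2 (Or.inl rfl)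
    · exact ha.2 (Or.inr rfl)
  · -- cardinality
    have hsub : ({v, w} : Set V) ⊆ T := by
      rintro x (rfl | rfl)
      · exact hvT
      · exact hwT
    have hcard2 : ({v, w} : Set V).ncard = 2 := Set.ncard_pair hvw
    have hdiff : (T \ {v, w}).ncard = T.ncard - 2 := by
      rw [Set.ncard_diff hsub, hcard2]
    -- upper bound: insert v (T \ {v,w}) is independent in G
    have hvnot : v ∉ T \ {v, w} := fun h => h.2 (Or.inl rfl)
    have hins : G.IsIndepSet' (insert v (T \ {v, w})) := by
      intro a ha b hb hne hab
      have ha' : a = v ∨ a ∈ T \ {v, w} := ha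
      have hb' : b = v ∨ b ∈ T \ {v, w} := hb
      have haT : a ∈ T := by
        rcases ha' with rfl | h
        · exact hvT
        · exact h.1
      have hbT : b ∈ T := by
        rcases hb' with rfl | h
        · exact hvT
        · exact h.1
      rcases hkey a b haT hbT hab with ⟨rfl, rfl⟩ | ⟨rfl, rfl⟩
      · rcases hb' with h | h
        · exact hvw h.symm
        · exact h.2 (Or.inr rfl)
      · rcases ha' with h | h
        · exact hvw h.symm
        · exact h.2 (Or.inr rfl)
    have hinscard : (insert v (T \ {v, w})).ncard = (T \ {v, w}).ncard + 1 :=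
      Set.ncard_insert_of_notMem hvnot (Set.toFinite _)
    have hub := indep_ncard_le_indepNum G hins
    rw [hinscard] at hub
    omega
end
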